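/- arXiv:2202.04997 — 2 statements merged into one kernel-verified Lean document; each statement's English description precedes it below -/
import Mathlib

section
/- A graph G on n vertices satisfies F(G) = n - 1 if and only if G has an isolated vertex. -/
namespace ZeroForcing

/-- One step of the zero forcing process: all vertices forced from blue set `S`
(a blue vertex with exactly one white neighbor forces that neighbor). -/
def step {V : Type*} (G : SimpleGraph V) (S : Set V) : Set V :=
  S ∪ {v | ∃ u ∈ S, G.Adj u v ∧ ∀ w, G.Adj u w → w ∉ S → w = v}

/-- `S` is a zero forcing set: iterating the color-change rule makes everything blue. -/
def IsZeroForcingSet {V : Type*} (G : SimpleGraph V) (S : Set V) : Prop :=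
  ∃ k, (step G)^[k] S = Set.univ

/-- `S` is a failed zero forcing set. -/
def IsFailedSet {V : Type*} (G : SimpleGraph V) (S : Set V) : Prop :=
  ¬ IsZeroForcingSet G S

/-- The zero forcing number `Z(G)`. -/
noncomputable def Z {V : Type*} (G : SimpleGraph V) : ℕ :=
  sInf {k | ∃ S : Set V, S.ncard = k ∧ IsZeroForcingSet G S}

/-- The failed zero forcing number `F(G)`. -/
noncomputable def F {V : Type*} (G : SimpleGraph V) : ℕ :=
  sSup {k | ∃ S : Set V, S.ncard = k ∧ IsFailedSet G S}

/-- The strong product of two simple graphs. -/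
def strongProd {α β : Type*} (G : SimpleGraph α) (H : SimpleGraph β) :
    SimpleGraph (α × β) where
  Adj x y := x ≠ y ∧ (x.1 = y.1 ∨ G.Adj x.1 y.1) ∧ (x.2 = y.2 ∨ H.Adj x.2 y.2)
  symm := by
    constructor
    rintro x y ⟨h1, h2, h3⟩
    exact ⟨h1.symm, h2.imp Eq.symm (fun h => G.adj_symm h), h3.imp Eq.symm (fun h => H.adj_symm h)⟩
  loopless := ⟨fun x h => h.1 rfl⟩

/-- The lexicographic product of two simple graphs. -/
def lexProd {α β : Type*} (G : SimpleGraph α) (H : SimpleGraph β) :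
    SimpleGraph (α × β) where
  Adj x y := G.Adj x.1 y.1 ∨ (x.1 = y.1 ∧ H.Adj x.2 y.2)
  symm := by
    constructor
    rintro x y (h | ⟨h1, h2⟩)
    · exact Or.inl h.symm
    · exact Or.inr ⟨h1.symm, h2.symm⟩
  loopless := by
    constructor
    rintro x (h | ⟨h1, h2⟩)
    · exact G.irrefl h
    · exact H.irrefl h2

/-- The corona `G ∘ H`: one copy of `G` and, for each vertex `a` of `G`, a copy of `H`
all of whose vertices are joined to `a`. -/
def corona {α β : Type*} (G : SimpleGraph α) (H : SimpleGraph β) :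
    SimpleGraph (α ⊕ α × β) where
  Adj x y :=
    match x, y with
    | .inl a, .inl a' => G.Adj a a'
    | .inl a, .inr p => a = p.1
    | .inr p, .inl a' => p.1 = a'
    | .inr p, .inr q => p.1 = q.1 ∧ H.Adj p.2 q.2
  symm := by
    constructor
    rintro (a | p) (a' | q) h
    · exact G.adj_symm h
    · exact h.symm
    · exact h.symm
    · exact ⟨h.1.symm, H.adj_symm h.2⟩
  loopless := by
    constructor
    rintro (a | p) h
    · exact G.irrefl h
    · exact H.irrefl h.2

end ZeroForcing

/-!
`F(G) ≤ n - 1` always, since the full vertex set forces trivially. A set of `n - 1` blue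
vertices misses a single vertex `v`, and it fails exactly when no blue vertex can force `v`,
i.e. when `v` has no neighbour: any neighbour of `v` is blue and has `v` as its only white
neighbour.
-/

namespace ZeroForcing

variable {V : Type*} (G : SimpleGraph V)

theorem isZeroForcingSet_univ : IsZeroForcingSet G Set.univ := ⟨0, rfl⟩

theorem isFailedSet_of_step_eq {S : Set V} (hS : step G S = S) (hne : S ≠ Set.univ) :
    IsFailedSet G S := by
  rintro ⟨k, hk⟩
  exact hne (Function.iterate_fixed hS k ▸ hk)

theorem step_empty : step G ∅ = ∅ := by
  simp [step]

theorem isFailedSet_empty [Nonempty V] : IsFailedSet G ∅ :=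
  isFailedSet_of_step_eq G (step_empty G) Set.empty_ne_univ

theorem IsFailedSet.ncard_lt [Finite V] {G : SimpleGraph V} {S : Set V} (hS : IsFailedSet G S) :
    S.ncard < Nat.card V :=
  Set.ncard_lt_card fun h => hS (h ▸ isZeroForcingSet_univ G)

theorem step_compl_singleton_of_isolated {v : V} (hv : ∀ w, ¬ G.Adj v w) :
    step G {v}ᶜ = {v}ᶜ := by
  refine Set.union_eq_left.mpr ?_
  rintro x ⟨u, -, hux, -⟩ rfl
  exact hv u hux.symm

theorem step_compl_singleton_of_adj {v w : V} (hvw : G.Adj v w) : step G {v}ᶜ = Set.univ := by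
  refine Set.eq_univ_of_forall fun x => ?_
  by_cases hx : x = v
  · subst hx
    exact Or.inr ⟨w, hvw.ne', hvw.symm, fun z _ hz => not_not.mp hz⟩
  · exact Or.inl hx

theorem isFailedSet_compl_singleton_iff {v : V} :
    IsFailedSet G {v}ᶜ ↔ ∀ w, ¬ G.Adj v w := by
  refine ⟨fun hfail w hvw => hfail ⟨1, step_compl_singleton_of_adj G hvw⟩, fun hv => ?_⟩
  exact isFailedSet_of_step_eq G (step_compl_singleton_of_isolated G hv)
    (Set.compl_ne_univ.mpr (Set.singleton_nonempty v))

theorem bddAbove_ncard_failedSets [Finite V] :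
    BddAbove {k | ∃ S : Set V, S.ncard = k ∧ IsFailedSet G S} :=
  ⟨Nat.card V, fun _ ⟨_, hS, hfail⟩ => hS ▸ hfail.ncard_lt.le⟩

theorem le_F [Finite V] {S : Set V} (hS : IsFailedSet G S) : S.ncard ≤ F G :=
  le_csSup (bddAbove_ncard_failedSets G) ⟨S, rfl, hS⟩

theorem F_le_card_sub_one [Finite V] : F G ≤ Nat.card V - 1 :=
  csSup_le' fun _ ⟨_, hS, hfail⟩ => hS ▸ Nat.le_sub_one_of_lt hfail.ncard_lt

theorem exists_isFailedSet_ncard_eq_F [Finite V] [Nonempty V] :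
    ∃ S : Set V, S.ncard = F G ∧ IsFailedSet G S :=
  Nat.sSup_mem (s := {k | ∃ S : Set V, S.ncard = k ∧ IsFailedSet G S})
    ⟨0, ∅, Set.ncard_empty V, isFailedSet_empty G⟩ (bddAbove_ncard_failedSets G)

end ZeroForcing

theorem Set.exists_eq_compl_singleton_of_ncard_eq_card_sub_one {α : Type*} [Finite α]
    [Nonempty α] {S : Set α} (hS : S.ncard = Nat.card α - 1) : ∃ v, S = {v}ᶜ := by
  have hcompl : Sᶜ.ncard = 1 := by
    rw [Set.ncard_compl, hS]
    have := Nat.card_pos (α := α)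
    omega
  obtain ⟨v, hv⟩ := Set.ncard_eq_one.mp hcompl
  exact ⟨v, by rw [← hv, compl_compl]⟩

theorem failed_zf_eq_card_sub_one_iff_isolated {V : Type*} [Fintype V] [Nonempty V]
    (G : SimpleGraph V) :
    ZeroForcing.F G = Fintype.card V - 1 ↔ ∃ v : V, ∀ w : V, ¬ G.Adj v w := by
  open ZeroForcing in
  rw [← Nat.card_eq_fintype_card]
  constructor
  · intro hF
    obtain ⟨S, hS, hfail⟩ := exists_isFailedSet_ncard_eq_F G
    obtain ⟨v, rfl⟩ := Set.exists_eq_compl_singleton_of_ncard_eq_card_sub_one (hS.trans hF)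
    exact ⟨v, (isFailedSet_compl_singleton_iff G).mp hfail⟩
  · rintro ⟨v, hv⟩
    refine le_antisymm (F_le_card_sub_one G) ?_
    calc Nat.card V - 1 = ({v}ᶜ : Set V).ncard := by rw [Set.ncard_compl, Set.ncard_singleton]
      _ ≤ F G := le_F G ((isFailedSet_compl_singleton_iff G).mpr hv)
end

section
/- For integers m, n > 2, F(C_m □ C_n) ≥ ⌈mn/2⌉. -/
/-!
Colour the torus `C_m □ C_n` like a chessboard, `(i, j)` blue iff `i ≡ j (mod 2)`. Since `m, n ≥ 2`,
every vertex of a cycle has a neighbour of the other parity, so every blue vertex has a white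
neighbour in its row and another one in its column. With two white neighbours no blue vertex ever
forces, so the chessboard colouring is a failed zero forcing set, and it has `⌈mn/2⌉` vertices.
-/

open Finset SimpleGraph

namespace ZeroForcing

variable {V : Type*} {G : SimpleGraph V} {S : Set V}

theorem step_eq_self_of_two_white_neighbors
    (h : ∀ u ∈ S, ∃ w₁ w₂, w₁ ≠ w₂ ∧ G.Adj u w₁ ∧ G.Adj u w₂ ∧ w₁ ∉ S ∧ w₂ ∉ S) :
    step G S = S := by
  refine Set.union_eq_self_of_subset_right ?_
  rintro v ⟨u, hu, -, hforce⟩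
  obtain ⟨w₁, w₂, hne, hadj₁, hadj₂, hw₁, hw₂⟩ := h u hu
  exact absurd ((hforce w₁ hadj₁ hw₁).trans (hforce w₂ hadj₂ hw₂).symm) hne

theorem isFailedSet_of_step_eq_self (hS : step G S = S) (hne : S ≠ Set.univ) :
    IsFailedSet G S := by
  rintro ⟨k, hk⟩
  rw [Function.iterate_fixed hS] at hk
  exact hne hk

theorem ncard_le_F [Finite V] (hS : IsFailedSet G S) : S.ncard ≤ F G :=
  le_csSup ⟨Nat.card V, by rintro k ⟨T, rfl, -⟩; exact Set.ncard_le_card T⟩ ⟨S, rfl, hS⟩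

theorem isFailedSet_boxProd_setOf_eq {α β γ : Type*} [Nonempty α] [Nonempty β]
    {G : SimpleGraph α} {H : SimpleGraph β} {f : α → γ} {g : β → γ}
    (hf : ∀ a, ∃ a', G.Adj a a' ∧ f a' ≠ f a) (hg : ∀ b, ∃ b', H.Adj b b' ∧ g b' ≠ g b) :
    IsFailedSet (G □ H) {p | f p.1 = g p.2} := by
  refine isFailedSet_of_step_eq_self (step_eq_self_of_two_white_neighbors ?_) ?_
  · rintro ⟨a, b⟩ (hab : f a = g b)
    obtain ⟨a', ha, hfa⟩ := hf a
    obtain ⟨b', hb, hgb⟩ := hg b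
    refine ⟨(a', b), (a, b'), fun h => ha.ne (Prod.ext_iff.1 h).1.symm,
      boxProd_adj_left.2 ha, boxProd_adj_right.2 hb, ?_, ?_⟩
    · exact fun h : f a' = g b => hfa (h.trans hab.symm)
    · exact fun h : f a = g b' => hgb (h.symm.trans hab)
  · obtain ⟨a⟩ := ‹Nonempty α›
    obtain ⟨b⟩ := ‹Nonempty β›
    obtain ⟨a', -, hfa⟩ := hf a
    intro h
    have hmem : ∀ p : α × β, f p.1 = g p.2 := Set.eq_univ_iff_forall.1 h
    exact hfa ((hmem (a', b)).trans (hmem (a, b)).symm)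

end ZeroForcing

theorem SimpleGraph.pathGraph_exists_adj_natCast_ne {k : ℕ} (hk : 2 ≤ k) (i : Fin k) :
    ∃ j, (pathGraph k).Adj i j ∧ (j.val : ZMod 2) ≠ i.val := by
  simp only [pathGraph_adj, ne_eq, ZMod.natCast_eq_natCast_iff']
  by_cases h : i.val + 1 < k
  · exact ⟨⟨i + 1, h⟩, .inl rfl, show (i.val + 1) % 2 ≠ i.val % 2 by omega⟩
  · exact ⟨⟨i - 1, by omega⟩, .inr (show i.val - 1 + 1 = i.val by omega),
      show (i.val - 1) % 2 ≠ i.val % 2 by omega⟩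

theorem SimpleGraph.cycleGraph_exists_adj_natCast_ne {k : ℕ} (hk : 2 ≤ k) (i : Fin k) :
    ∃ j, (cycleGraph k).Adj i j ∧ (j.val : ZMod 2) ≠ i.val :=
  (pathGraph_exists_adj_natCast_ne hk i).imp fun _ h => ⟨pathGraph_le_cycleGraph h.1, h.2⟩

theorem Finset.card_filter_fst_eq_snd {α β γ : Type*} [Fintype α] [Fintype β] [Fintype γ]
    [DecidableEq γ] (f : α → γ) (g : β → γ) :
    #{p : α × β | f p.1 = g p.2} = ∑ c, #{a | f a = c} * #{b | g b = c} :=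
  calc #{p : α × β | f p.1 = g p.2} = ∑ a, #{b | g b = f a} := by
        simp only [card_filter, ← univ_product_univ, sum_product, eq_comm]
    _ = ∑ c, ∑ a with f a = c, #{b | g b = c} :=
        (sum_fiberwise' univ f fun c => #{b | g b = c}).symm
    _ = ∑ c, #{a | f a = c} * #{b | g b = c} := by simp only [sum_const, smul_eq_mul]

theorem ZMod.sum_univ_two {M : Type*} [AddCommMonoid M] (f : ZMod 2 → M) :
    ∑ c, f c = f 0 + f 1 :=
  Fin.sum_univ_two f

theorem Fin.card_filter_natCast_eq {r : ℕ} (hr : 0 < r) (m v : ℕ) :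
    #{i : Fin m | (i.val : ZMod r) = v} = m / r + if v % r < m % r then 1 else 0 := by
  simp only [ZMod.natCast_eq_natCast_iff]
  rw [← Nat.count_modEq_card m hr, Nat.count_eq_card_filter_range, card_filter, card_filter,
    Fin.sum_univ_eq_sum_range (fun i => if i ≡ v [MOD r] then 1 else 0)]

theorem Nat.add_one_div_two_mul_add_div_two_mul (m n : ℕ) :
    (m + 1) / 2 * ((n + 1) / 2) + m / 2 * (n / 2) = (m * n + 1) / 2 := by
  rcases Nat.even_or_odd' m with ⟨a, rfl | rfl⟩ <;> rcases Nat.even_or_odd' n with ⟨b, rfl | rfl⟩ <;>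
    simp only [Nat.mul_add_div two_pos, Nat.mul_div_cancel_left _ two_pos, add_assoc] <;>
    ring_nf <;> omega

theorem card_filter_natCast_fst_eq_natCast_snd (m n : ℕ) :
    #{p : Fin m × Fin n | (p.1.val : ZMod 2) = p.2.val} = (m * n + 1) / 2 := by
  have hparity : ∀ k : ℕ, #{i : Fin k | (i.val : ZMod 2) = 0} = (k + 1) / 2 ∧
      #{i : Fin k | (i.val : ZMod 2) = 1} = k / 2 := fun k => by
    have h0 := Fin.card_filter_natCast_eq two_pos k 0
    have h1 := Fin.card_filter_natCast_eq two_pos k 1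
    rw [Nat.cast_zero] at h0
    rw [Nat.cast_one] at h1
    rw [h0, h1]
    constructor <;> split_ifs <;> omega
  rw [card_filter_fst_eq_snd (fun i : Fin m => (i.val : ZMod 2)) fun j : Fin n => (j.val : ZMod 2),
    ZMod.sum_univ_two, (hparity m).1, (hparity m).2, (hparity n).1, (hparity n).2, Nat.add_one_div_two_mul_add_div_two_mul]

theorem failed_zf_torus_lower (m n : ℕ) (hm : 2 < m) (hn : 2 < n) :
    (m * n + 1) / 2 ≤
      ZeroForcing.F ((SimpleGraph.cycleGraph m).boxProd (SimpleGraph.cycleGraph n)) := by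
  have : NeZero m := ⟨by omega⟩
  have : NeZero n := ⟨by omega⟩
  have hfail := ZeroForcing.isFailedSet_boxProd_setOf_eq
    (cycleGraph_exists_adj_natCast_ne (k := m) (by omega))
    (cycleGraph_exists_adj_natCast_ne (k := n) (by omega))
  calc (m * n + 1) / 2 = {p : Fin m × Fin n | (p.1.val : ZMod 2) = p.2.val}.ncard := by
        rw [← card_filter_natCast_fst_eq_natCast_snd, ← Set.ncard_coe_finset, coe_filter_univ]
    _ ≤ _ := ZeroForcing.ncard_le_F hfail
end
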